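/- arXiv:1611.09351 — 3 statements merged into one kernel-verified Lean document; each statement's English description precedes it below -/
import Mathlib

section
/- Let P be a probability measure on a measurable space Ω and let E, H be measurable events with P(E ∩ H) > 0, P(Eᶜ ∩ H) > 0, P(E ∩ Hᶜ) > 0 and P(Eᶜ ∩ Hᶜ) > 0. Let l, l′ be real numbers, let Q_l be the single-likelihood Adams conditioning of P at (l, E, H), and let R be the single-likelihood Adams conditioning of the set function Q_l at (l′, E, Hᶜ). Then R⁰(E|H) = l. -/
open MeasureTheory Set

variable {Ω : Type*} [MeasurableSpace Ω]

/-- Real-valued probability of an event. -/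
noncomputable def pr (P : MeasureTheory.Measure Ω) : Set Ω → ℝ := fun A => (P A).toReal

/-- Conditional probability `Q⁰(A|B) = Q(A ∩ B)/Q(B)` of a set function (with `x/0 = 0`). -/
noncomputable def cond0 (Q : Set Ω → ℝ) (A B : Set Ω) : ℝ := Q (A ∩ B) / Q B

/-- Single-likelihood Adams conditioning of the set function `Q` at `(l, E, H)`. -/
noncomputable def slac (Q : Set Ω → ℝ) (l : ℝ) (E H : Set Ω) : Set Ω → ℝ :=
  fun x => Q (H ∩ E ∩ x) * (l / cond0 Q E H)
    + Q (H ∩ Eᶜ ∩ x) * ((1 - l) / cond0 Q Eᶜ H)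
    + Q (Hᶜ ∩ x)

/-- Double-likelihood Adams conditioning of the set function `Q` at `(l, l', E, H)`. -/
noncomputable def dlac (Q : Set Ω → ℝ) (l l' : ℝ) (E H : Set Ω) : Set Ω → ℝ :=
  fun x => Q (H ∩ E ∩ x) * (l / cond0 Q E H)
    + Q (H ∩ Eᶜ ∩ x) * ((1 - l) / cond0 Q Eᶜ H)
    + Q (Hᶜ ∩ E ∩ x) * (l' / cond0 Q E Hᶜ)
    + Q (Hᶜ ∩ Eᶜ ∩ x) * ((1 - l') / cond0 Q Eᶜ Hᶜ)

/-!
Conditioning at `(l', E, Hᶜ)` only rescales mass inside `Hᶜ`, so it leaves `Q_l` unchanged on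
subsets of `H`; hence `R⁰(E|H) = Q_l⁰(E|H)`. And `Q_l` rescales `E ∩ H` and `Eᶜ ∩ H` so that they
receive masses `l·P(H)` and `(1 - l)·P(H)`, whence `Q_l(H) = P(H)` and `Q_l⁰(E|H) = l`.
-/

section SetFunction

variable {α : Type*} {Q : Set α → ℝ} {l : ℝ} {E H : Set α}

theorem slac_eq_of_disjoint (hQ : Q ∅ = 0) {x : Set α} (hx : Disjoint H x) :
    slac Q l E H x = Q x := by
  have hHx : H ∩ x = ∅ := hx.inter_eq
  have hE : H ∩ E ∩ x = ∅ := by rw [inter_right_comm, hHx, empty_inter]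
  have hEc : H ∩ Eᶜ ∩ x = ∅ := by rw [inter_right_comm, hHx, empty_inter]
  simp only [slac, hE, hEc, hQ, inter_eq_right.mpr (subset_compl_iff_disjoint_left.mpr hx)]
  ring

theorem slac_empty (hQ : Q ∅ = 0) : slac Q l E H ∅ = 0 := by
  rw [slac_eq_of_disjoint hQ (disjoint_empty H), hQ]

theorem cond0_slac_of_disjoint (hQ : Q ∅ = 0) {A B : Set α} (hB : Disjoint H B) :
    cond0 (slac Q l E H) A B = cond0 Q A B := by
  rw [cond0, cond0, slac_eq_of_disjoint hQ hB,
    slac_eq_of_disjoint hQ (hB.mono_right inter_subset_right)]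

theorem slac_inter_self (hQ : Q ∅ = 0) (hEH : Q (E ∩ H) ≠ 0) :
    slac Q l E H (E ∩ H) = l * Q H := by
  have hE : H ∩ E ∩ (E ∩ H) = E ∩ H := by ext; simp only [mem_inter_iff]; tauto
  have hEc : H ∩ Eᶜ ∩ (E ∩ H) = ∅ := by ext; simp only [mem_inter_iff, mem_compl_iff, mem_empty_iff_false, iff_false]; tauto
  have hHc : Hᶜ ∩ (E ∩ H) = ∅ := by ext; simp only [mem_inter_iff, mem_compl_iff, mem_empty_iff_false, iff_false]; tauto
  simp only [slac, cond0, hE, hEc, hHc, hQ]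
  -- if `Q H = 0`, both sides vanish because `cond0 Q _ H = 0` by the convention `x / 0 = 0`
  rcases eq_or_ne (Q H) 0 with hH | hH
  · simp [hH]
  · field_simp
    ring

theorem slac_self (hQ : Q ∅ = 0) (hEH : Q (E ∩ H) ≠ 0) (hEcH : Q (Eᶜ ∩ H) ≠ 0) :
    slac Q l E H H = Q H := by
  have hE : H ∩ E ∩ H = E ∩ H := by ext; simp only [mem_inter_iff]; tauto
  have hEc : H ∩ Eᶜ ∩ H = Eᶜ ∩ H := by ext; simp only [mem_inter_iff]; tauto
  simp only [slac, cond0, hE, hEc, compl_inter_self, hQ]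
  rcases eq_or_ne (Q H) 0 with hH | hH
  · simp [hH]
  · field_simp
    ring

theorem cond0_slac (hQ : Q ∅ = 0) (hEH : Q (E ∩ H) ≠ 0) (hEcH : Q (Eᶜ ∩ H) ≠ 0)
    (hH : Q H ≠ 0) : cond0 (slac Q l E H) E H = l := by
  rw [cond0, slac_inter_self hQ hEH, slac_self hQ hEH hEcH, mul_div_cancel_right₀ l hH]

end SetFunction

theorem pr_empty (P : Measure Ω) : pr P ∅ = 0 := by simp [pr]

theorem stmt_4_general (P : MeasureTheory.Measure Ω) [IsProbabilityMeasure P]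
    (E H : Set Ω)
    (hEH : 0 < pr P (E ∩ H)) (hEcH : 0 < pr P (Eᶜ ∩ H)) (l l' : ℝ) :
    cond0 (slac (slac (pr P) l E H) l' E Hᶜ) E H = l := by
  have hH : pr P H ≠ 0 := (hEH.trans_le (measureReal_mono inter_subset_right)).ne'
  rw [cond0_slac_of_disjoint (slac_empty (pr_empty P)) disjoint_compl_left,
    cond0_slac (pr_empty P) hEH.ne' hEcH.ne' hH]

theorem stmt_4 (P : MeasureTheory.Measure Ω) [IsProbabilityMeasure P]
    (E H : Set Ω) (hE : MeasurableSet E) (hH : MeasurableSet H)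
    (hEH : 0 < pr P (E ∩ H)) (hEcH : 0 < pr P (Eᶜ ∩ H))
    (hEHc : 0 < pr P (E ∩ Hᶜ)) (hEcHc : 0 < pr P (Eᶜ ∩ Hᶜ)) (l l' : ℝ) :
    cond0 (slac (slac (pr P) l E H) l' E Hᶜ) E H = l :=
  stmt_4_general P E H hEH hEcH l l'
end

section
/- Let P be a probability measure on a measurable space Ω and let E, H be measurable events with P(E ∩ H) > 0, P(Eᶜ ∩ H) > 0, P(E ∩ Hᶜ) > 0 and P(Eᶜ ∩ Hᶜ) > 0. Let l, l′ be real numbers, let Q_l be the single-likelihood Adams conditioning of P at (l, E, H), and let R be the single-likelihood Adams conditioning of the set function Q_l at (l′, E, Hᶜ). Then R(E) = l′·(1 − P(H)) + l·P(H). -/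
open MeasureTheory Set

variable {Ω : Type*} [MeasurableSpace Ω]

/-! Conditioning at `(l, E, H)` leaves `Q` unchanged off `H`, so the second conditioning at
`(l', E, Hᶜ)` sees `P` on `Hᶜ` and rescales `P(E ∩ Hᶜ)` to `l' · P(Hᶜ)`, while on `H` it only
reads the value `l · P(H)` that the first conditioning gave to `H ∩ E`. -/

section SetFunction

variable {α : Type*} (Q : Set α → ℝ) {E H : Set α} (l : ℝ)

-- No hypothesis on `Q H`: if it vanishes, both sides are `0` because of `l / 0 = 0`.
lemma mul_div_cond0 (hEH : Q (E ∩ H) ≠ 0) : Q (E ∩ H) * (l / cond0 Q E H) = l * Q H := by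
  rw [cond0, div_div_eq_mul_div]
  field_simp

variable {Q}

lemma slac_apply_of_subset_compl (h0 : Q ∅ = 0) {x : Set α} (hx : x ⊆ Hᶜ) :
    slac Q l E H x = Q x := by
  have hHx : ∀ F : Set α, H ∩ F ∩ x = ∅ := fun F =>
    subset_empty_iff.mp fun ω hω => hx hω.2 hω.1.1
  simp only [slac, hHx, h0, inter_eq_right.mpr hx]
  ring

lemma slac_apply_inter_self (h0 : Q ∅ = 0) (hEH : Q (E ∩ H) ≠ 0) :
    slac Q l E H (H ∩ E) = l * Q H := by
  have hE : H ∩ E ∩ (H ∩ E) = E ∩ H := by grind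
  have hEc : H ∩ Eᶜ ∩ (H ∩ E) = ∅ := by grind
  have hHc : Hᶜ ∩ (H ∩ E) = ∅ := by grind
  simp only [slac]
  rw [hE, hEc, hHc, h0, mul_div_cond0 Q l hEH]
  ring

lemma slac_apply_self (h0 : Q ∅ = 0) (hEH : Q (E ∩ H) ≠ 0) :
    slac Q l E H E = l * Q H + Q (Hᶜ ∩ E) := by
  have hE : H ∩ E ∩ E = E ∩ H := by grind
  have hEc : H ∩ Eᶜ ∩ E = ∅ := by grind
  simp only [slac]
  rw [hE, hEc, h0, mul_div_cond0 Q l hEH]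
  ring

end SetFunction

lemma pr_compl (P : Measure Ω) [IsProbabilityMeasure P] {H : Set Ω} (hH : MeasurableSet H) :
    pr P Hᶜ = 1 - pr P H :=
  probReal_compl_eq_one_sub hH

theorem stmt_7_general (P : MeasureTheory.Measure Ω) [IsProbabilityMeasure P]
    (E H : Set Ω) (hH : MeasurableSet H)
    (hEH : 0 < pr P (E ∩ H))
    (hEHc : 0 < pr P (E ∩ Hᶜ)) (l l' : ℝ) :
    slac (slac (pr P) l E H) l' E Hᶜ E = l' * (1 - pr P H) + l * pr P H := by
  set Q := slac (pr P) l E H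
  have hP0 : pr P ∅ = 0 := by simp [pr]
  have hQ0 : Q ∅ = 0 := (slac_apply_of_subset_compl l hP0 (empty_subset _)).trans hP0
  have hQEHc : Q (E ∩ Hᶜ) = pr P (E ∩ Hᶜ) := slac_apply_of_subset_compl l hP0 inter_subset_right
  have hQHc : Q Hᶜ = pr P Hᶜ := slac_apply_of_subset_compl l hP0 subset_rfl
  have hQHE : Q (H ∩ E) = l * pr P H := slac_apply_inter_self l hP0 hEH.ne'
  calc slac Q l' E Hᶜ E = l' * Q Hᶜ + Q (Hᶜᶜ ∩ E) := slac_apply_self l' hQ0 (hQEHc ▸ hEHc.ne')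
    _ = l' * (1 - pr P H) + l * pr P H := by
      rw [compl_compl, hQHc, hQHE, pr_compl P hH]

theorem stmt_7 (P : MeasureTheory.Measure Ω) [IsProbabilityMeasure P]
    (E H : Set Ω) (hE : MeasurableSet E) (hH : MeasurableSet H)
    (hEH : 0 < pr P (E ∩ H)) (hEcH : 0 < pr P (Eᶜ ∩ H))
    (hEHc : 0 < pr P (E ∩ Hᶜ)) (hEcHc : 0 < pr P (Eᶜ ∩ Hᶜ)) (l l' : ℝ) :
    slac (slac (pr P) l E H) l' E Hᶜ E = l' * (1 - pr P H) + l * pr P H :=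
  stmt_7_general P E H hH hEH hEHc l l'
end

section
/- Let P be a probability measure on a measurable space Ω and let E, H be measurable events with P(E ∩ H) > 0, P(Eᶜ ∩ H) > 0, P(E ∩ Hᶜ) > 0 and P(Eᶜ ∩ Hᶜ) > 0. Let l, l′ be real numbers with 0 < l ≤ 1 and 0 < l′ ≤ 1 and set r = l / l′. Then Bayesian conditioning on E of the double-likelihood Adams conditioning Q_{l,l′} of P at (l, l′, E, H) gives the posterior probability of H: Q_{l,l′}⁰(H|E) = r·P(H) / (1 + (r − 1)·P(H)). -/
/-! Under `Q = dlac P l l' E H` the four cells `H ∩ E, H ∩ Eᶜ, Hᶜ ∩ E, Hᶜ ∩ Eᶜ` are rescaled so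
that `Q(H ∩ E) = l·P(H)` and `Q(Hᶜ ∩ E) = l'·P(Hᶜ)`. Hence `Q⁰(H|E) = l·P(H) / (l·P(H) + l'·(1 - P(H)))`,
and dividing numerator and denominator by `l'` gives the likelihood-ratio form. -/

open MeasureTheory Set

variable {Ω : Type*} [MeasurableSpace Ω]

section SetFunction

variable {α : Type*} (Q : Set α → ℝ) (l l' : ℝ) (E H : Set α)

lemma mul_div_cond0_s13 {A B : Set α} (h : Q (A ∩ B) ≠ 0) :
    Q (A ∩ B) * (l / cond0 Q A B) = l * Q B := by
  unfold cond0
  field_simp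

lemma dlac_inter (hQ : Q ∅ = 0) :
    dlac Q l l' E H (H ∩ E) = Q (E ∩ H) * (l / cond0 Q E H) := by
  have h₁ : H ∩ E ∩ (H ∩ E) = E ∩ H := by rw [inter_self, inter_comm]
  have h₂ : H ∩ Eᶜ ∩ (H ∩ E) = ∅ := by
    ext; simp only [mem_inter_iff, mem_compl_iff, mem_empty_iff_false, iff_false]; tauto
  have h₃ : Hᶜ ∩ E ∩ (H ∩ E) = ∅ := by
    ext; simp only [mem_inter_iff, mem_compl_iff, mem_empty_iff_false, iff_false]; tauto
  have h₄ : Hᶜ ∩ Eᶜ ∩ (H ∩ E) = ∅ := by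
    ext; simp only [mem_inter_iff, mem_compl_iff, mem_empty_iff_false, iff_false]; tauto
  simp only [dlac, h₁, h₂, h₃, h₄, hQ, zero_mul, add_zero]

lemma dlac_self (hQ : Q ∅ = 0) :
    dlac Q l l' E H E =
      Q (E ∩ H) * (l / cond0 Q E H) + Q (E ∩ Hᶜ) * (l' / cond0 Q E Hᶜ) := by
  have h₁ : H ∩ E ∩ E = E ∩ H := by rw [inter_assoc, inter_self, inter_comm]
  have h₂ : H ∩ Eᶜ ∩ E = ∅ := by rw [inter_assoc, compl_inter_self, inter_empty]
  have h₃ : Hᶜ ∩ E ∩ E = E ∩ Hᶜ := by rw [inter_assoc, inter_self, inter_comm]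
  have h₄ : Hᶜ ∩ Eᶜ ∩ E = ∅ := by rw [inter_assoc, compl_inter_self, inter_empty]
  simp only [dlac, h₁, h₂, h₃, h₄, hQ, zero_mul, add_zero]

lemma cond0_dlac (hQ : Q ∅ = 0) (hEH : Q (E ∩ H) ≠ 0) (hEHc : Q (E ∩ Hᶜ) ≠ 0) :
    cond0 (dlac Q l l' E H) H E = l * Q H / (l * Q H + l' * Q Hᶜ) := by
  rw [cond0, dlac_inter Q l l' E H hQ, dlac_self Q l l' E H hQ,
    mul_div_cond0_s13 Q l hEH, mul_div_cond0_s13 Q l' hEHc]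

end SetFunction

lemma div_eq_likelihood_ratio_form {l l' : ℝ} (hl' : l' ≠ 0) (p : ℝ) :
    l * p / (l * p + l' * (1 - p)) = l / l' * p / (1 + (l / l' - 1) * p) := by
  have hnum : l / l' * p = l * p / l' := by ring
  have hden : 1 + (l / l' - 1) * p = (l * p + l' * (1 - p)) / l' := by field_simp; ring
  rw [hnum, hden, div_div_div_cancel_right₀ hl']

theorem stmt_13_general (P : MeasureTheory.Measure Ω) [IsProbabilityMeasure P]
    (E H : Set Ω) (hH : MeasurableSet H)
    (hEH : 0 < pr P (E ∩ H))
    (hEHc : 0 < pr P (E ∩ Hᶜ))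
    (l l' : ℝ) (hl'0 : 0 < l')
    (r : ℝ) (hr : r = l / l') :
    cond0 (dlac (pr P) l l' E H) H E = r * pr P H / (1 + (r - 1) * pr P H) := by
  have hempty : pr P ∅ = 0 := by simp [pr]
  have hcompl : pr P Hᶜ = 1 - pr P H := probReal_compl_eq_one_sub hH
  rw [cond0_dlac (pr P) l l' E H hempty hEH.ne' hEHc.ne', hcompl, hr,
    div_eq_likelihood_ratio_form hl'0.ne']

theorem stmt_13 (P : MeasureTheory.Measure Ω) [IsProbabilityMeasure P]
    (E H : Set Ω) (hE : MeasurableSet E) (hH : MeasurableSet H)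
    (hEH : 0 < pr P (E ∩ H)) (hEcH : 0 < pr P (Eᶜ ∩ H))
    (hEHc : 0 < pr P (E ∩ Hᶜ)) (hEcHc : 0 < pr P (Eᶜ ∩ Hᶜ))
    (l l' : ℝ) (hl0 : 0 < l) (hl1 : l ≤ 1) (hl'0 : 0 < l') (hl'1 : l' ≤ 1)
    (r : ℝ) (hr : r = l / l') :
    cond0 (dlac (pr P) l l' E H) H E = r * pr P H / (1 + (r - 1) * pr P H) :=
  stmt_13_general P E H hH hEH hEHc l l' hl'0 r hr
end
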